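/- arXiv:2605.10080 — 2 statements merged into one kernel-verified Lean document; each statement's English description precedes it below -/
import Mathlib

section
/- Let Ω ⊆ ℝⁿ be a nonempty closed convex set, let x, z ∈ Ω, and let ξ, ξ* ∈ ℝⁿ be such that ⟨ξ*, w − z⟩ ≤ 0 for all w ∈ Ω (i.e., ξ* lies in the normal cone of Ω at z). If q is the Euclidean projection of ξ onto the tangent cone T_Ω(x), then ⟨x − z, q⟩ ≤ ⟨x − z, ξ − ξ*⟩. -/
open Matrix

/-- Euclidean norm on `Fin k → ℝ`. -/
noncomputable def eNorm {k : ℕ} (x : Fin k → ℝ) : ℝ := Real.sqrt (x ⬝ᵥ x)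

/-- Tangent cone of `S` at `x`: closure of `{α • (z - x) : α ≥ 0, z ∈ S}`. -/
def tangentConeOf {k : ℕ} (S : Set (Fin k → ℝ)) (x : Fin k → ℝ) : Set (Fin k → ℝ) :=
  closure {y | ∃ α : ℝ, 0 ≤ α ∧ ∃ z ∈ S, y = α • (z - x)}

/-- `q` is the Euclidean projection of `y` onto `K`. -/
def IsEuclideanProj {k : ℕ} (K : Set (Fin k → ℝ)) (y q : Fin k → ℝ) : Prop :=
  q ∈ K ∧ ∀ w ∈ K, eNorm (y - q) ≤ eNorm (y - w)

/-!
Since `z ∈ Ω`, the direction `z - x` can be added to any element of the tangent cone `T_Ω(x)`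
without leaving it, so the first-order optimality condition of the projection `q` gives
`⟨ξ - q, z - x⟩ ≤ 0`. Adding `⟨ξ*, x - z⟩ ≤ 0`, the normal-cone condition at `z` tested
with `w = x`, yields the claim.
-/

open Filter Topology

lemma eNorm_le_eNorm_iff {k : ℕ} {a b : Fin k → ℝ} : eNorm a ≤ eNorm b ↔ a ⬝ᵥ a ≤ b ⬝ᵥ b :=
  Real.sqrt_le_sqrt_iff (by simpa using dotProduct_self_star_nonneg b)

lemma nonpos_of_forall_pos_le_mul {a c : ℝ} (h : ∀ t : ℝ, 0 < t → a ≤ t * c) : a ≤ 0 := by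
  have hlim : Tendsto (fun t : ℝ => t * c) (𝓝[>] 0) (𝓝 0) :=
    ((continuous_mul_const c).tendsto' 0 0 (zero_mul c)).mono_left nhdsWithin_le_nhds
  exact ge_of_tendsto hlim (eventually_nhdsWithin_of_forall h)

lemma add_smul_sub_mem_tangentConeOf {k : ℕ} {S : Set (Fin k → ℝ)} (hS : Convex ℝ S)
    {x z y : Fin k → ℝ} (hz : z ∈ S) (hy : y ∈ tangentConeOf S x) {t : ℝ} (ht : 0 < t) :
    y + t • (z - x) ∈ tangentConeOf S x := by
  refine map_mem_closure (f := (· + t • (z - x))) (continuous_add_const _) hy ?_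
  rintro _ ⟨α, hα, w, hw, rfl⟩
  have hαt : 0 < α + t := by positivity
  -- `α (w - x) + t (z - x) = (α + t) (w' - x)` with `w'` the convex combination of `w` and `z`
  refine ⟨α + t, hαt.le, (α / (α + t)) • w + (t / (α + t)) • z,
    hS hw hz (by positivity) (by positivity) (by field_simp), ?_⟩
  match_scalars <;> field_simp; ring

lemma IsEuclideanProj.dotProduct_sub_nonpos {k : ℕ} {K : Set (Fin k → ℝ)} {y q v : Fin k → ℝ}
    (hq : IsEuclideanProj K y q) (hv : ∀ t : ℝ, 0 < t → q + t • v ∈ K) : (y - q) ⬝ᵥ v ≤ 0 := by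
  suffices 2 * ((y - q) ⬝ᵥ v) ≤ 0 by linarith
  refine nonpos_of_forall_pos_le_mul (c := v ⬝ᵥ v) fun t ht => ?_
  have hmin := eNorm_le_eNorm_iff.mp (hq.2 _ (hv t ht))
  have hexpand : (y - (q + t • v)) ⬝ᵥ (y - (q + t • v))
      = (y - q) ⬝ᵥ (y - q) - 2 * t * ((y - q) ⬝ᵥ v) + t ^ 2 * (v ⬝ᵥ v) := by
    rw [← sub_sub]
    simp only [sub_dotProduct, dotProduct_sub, smul_dotProduct, dotProduct_smul, smul_eq_mul,
      dotProduct_comm v y, dotProduct_comm v q]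
    ring
  have hscaled : t * (2 * ((y - q) ⬝ᵥ v)) ≤ t * (t * (v ⬝ᵥ v)) := by linarith
  exact le_of_mul_le_mul_left hscaled ht

theorem stmt2_general {n : ℕ} (Ω : Set (Fin n → ℝ))
    (hconv : Convex ℝ Ω) (x z : Fin n → ℝ) (hx : x ∈ Ω) (hz : z ∈ Ω)
    (ξ ξstar q : Fin n → ℝ)
    (hnc : ∀ w ∈ Ω, ξstar ⬝ᵥ (w - z) ≤ 0)
    (hq : IsEuclideanProj (tangentConeOf Ω x) ξ q) :
    (x - z) ⬝ᵥ q ≤ (x - z) ⬝ᵥ (ξ - ξstar) := by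
  have hproj : (ξ - q) ⬝ᵥ (z - x) ≤ 0 :=
    hq.dotProduct_sub_nonpos fun t ht => add_smul_sub_mem_tangentConeOf hconv hz hq.1 ht
  have hnormal : ξstar ⬝ᵥ (x - z) ≤ 0 := hnc x hx
  rw [← neg_sub x z, dotProduct_neg, dotProduct_comm] at hproj
  rw [dotProduct_comm] at hnormal
  simp only [dotProduct_sub] at hproj hnormal ⊢
  linarith

theorem stmt2 {n : ℕ} (Ω : Set (Fin n → ℝ)) (hne : Ω.Nonempty) (hcl : IsClosed Ω)
    (hconv : Convex ℝ Ω) (x z : Fin n → ℝ) (hx : x ∈ Ω) (hz : z ∈ Ω)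
    (ξ ξstar q : Fin n → ℝ)
    (hnc : ∀ w ∈ Ω, ξstar ⬝ᵥ (w - z) ≤ 0)
    (hq : IsEuclideanProj (tangentConeOf Ω x) ξ q) :
    (x - z) ⬝ᵥ q ≤ (x - z) ⬝ᵥ (ξ - ξstar) :=
  stmt2_general Ω hconv x z hx hz ξ ξstar q hnc hq
end

section
/- Let η > 0, ζ_u, ζ_ω > 0, and d_u, d_ω > 0. Let ũ, ỹ, p̃, w̃ : ℝ → ℝ^{n_g} be continuous with p̃ and w̃ such that the functions σ̃_p^−(t) := (p̃(t) + η·w̃(t))/√(2η) and σ̃_o^−(t) := (ũ(t) − η·ỹ(t))/√(2η) are differentiable, and define σ̃_p^+(t) := (p̃(t) − η·w̃(t))/√(2η) and σ̃_o^+(t) := (ũ(t) + η·ỹ(t))/√(2η). Define ã_u(t) := σ̃_o^+(t − d_u) and ã_ω(t) := σ̃_p^+(t − d_ω), and assume the filter dynamics ζ_u·(σ̃_p^−)'(t) = −σ̃_p^−(t) + ã_u(t) and ζ_ω·(σ̃_o^−)'(t) = −σ̃_o^−(t) + ã_ω(t) hold for all t. Define S_ch(t) := (1/2)·∫_{t−d_u}^{t}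 ‖σ̃_o^+(s)‖² ds + (1/2)·∫_{t−d_ω}^{t} ‖σ̃_p^+(s)‖² ds + (ζ_u/2)·‖σ̃_p^−(t)‖² + (ζ_ω/2)·‖σ̃_o^−(t)‖². Then S_ch is differentiable and, for all t, S_ch'(t) = −⟨w̃(t), p̃(t)⟩ + ⟨ũ(t), ỹ(t)⟩ − (1/2)·‖ã_u(t) − σ̃_p^−(t)‖² − (1/2)·‖ã_ω(t) − σ̃_o^−(t)‖². -/
/-!
Each delay line stores the energy of the wave in transit, so the windowed integrals differentiate
to "energy entering minus energy leaving". The energy `½‖ã_u‖²` leaving the downlink is what the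
filter state absorbs through `ζ_u (σ̃_p⁻)' = ã_u - σ̃_p⁻`; completing the square leaves
`-½‖σ̃_p⁻‖² - ½‖ã_u - σ̃_p⁻‖²`. Finally the scattering transformation converts
`½‖σ⁺‖² - ½‖σ⁻‖²` at each port into the power `⟨ũ, ỹ⟩`, resp. `-⟨w̃, p̃⟩`.
-/

open Matrix intervalIntegral

theorem HasDerivAt.dotProduct {𝕜 n : Type*} [NontriviallyNormedField 𝕜] [Fintype n]
    {f g : 𝕜 → n → 𝕜} {f' g' : n → 𝕜} {x : 𝕜}
    (hf : HasDerivAt f f' x) (hg : HasDerivAt g g' x) :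
    HasDerivAt (fun s => f s ⬝ᵥ g s) (f' ⬝ᵥ g x + f x ⬝ᵥ g') x := by
  have hsum := HasDerivAt.fun_sum (u := Finset.univ) fun i _ =>
    (hasDerivAt_pi.mp hf i).fun_mul (hasDerivAt_pi.mp hg i)
  rw [Finset.sum_add_distrib] at hsum
  exact hsum

theorem hasDerivAt_integral_window {E : Type*} [NormedAddCommGroup E] [NormedSpace ℝ E]
    [CompleteSpace E] {g : ℝ → E} (hg : Continuous g) (d t : ℝ) :
    HasDerivAt (fun τ => ∫ s in (τ - d)..τ, g s) (g t - g (t - d)) t := by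
  have hprim : ∀ x, HasDerivAt (fun τ => ∫ s in (0 : ℝ)..τ, g s) (g x) x := fun x =>
    hg.integral_hasStrictDerivAt 0 x |>.hasDerivAt
  refine ((hprim t).sub ((hprim (t - d)).comp_sub_const t d)).congr_of_eventuallyEq
    (Filter.Eventually.of_forall fun τ => ?_)
  exact (integral_interval_sub_left (hg.intervalIntegrable _ _) (hg.intervalIntegrable _ _)).symm

theorem scattering_dotProduct_sub {n : Type*} [Fintype n] {η : ℝ} (hη : 0 < η)
    (a b : n → ℝ) :
    ((Real.sqrt (2 * η))⁻¹ • (a + η • b)) ⬝ᵥ ((Real.sqrt (2 * η))⁻¹ • (a + η • b)) -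
      ((Real.sqrt (2 * η))⁻¹ • (a - η • b)) ⬝ᵥ ((Real.sqrt (2 * η))⁻¹ • (a - η • b)) =
      2 * (a ⬝ᵥ b) := by
  have hsq : (Real.sqrt (2 * η))⁻¹ * (Real.sqrt (2 * η))⁻¹ * η = 1 / 2 := by
    rw [← mul_inv, Real.mul_self_sqrt (by positivity)]
    field_simp
  simp only [smul_dotProduct, dotProduct_smul, add_dotProduct, dotProduct_add,
    sub_dotProduct, dotProduct_sub, smul_eq_mul, dotProduct_comm b a]
  linear_combination (4 * (a ⬝ᵥ b)) * hsq

theorem dotProduct_sub_sub_self {n : Type*} [Fintype n] (a x : n → ℝ) :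
    (a - x) ⬝ᵥ x - (1 / 2) * (a ⬝ᵥ a) = -(1 / 2) * ((a - x) ⬝ᵥ (a - x)) - (1 / 2) * (x ⬝ᵥ x) := by
  simp only [sub_dotProduct, dotProduct_sub, dotProduct_comm x a]
  ring

theorem stmt15_general {ng : ℕ} (η ζu ζω du dω : ℝ)
    (hη : 0 < η)
    (u y p w : ℝ → Fin ng → ℝ)
    (hu : Continuous u) (hy : Continuous y) (hp : Continuous p) (hw : Continuous w)
    (σpp σpm σop σom : ℝ → Fin ng → ℝ)
    (h1 : σpp = fun t => (Real.sqrt (2 * η))⁻¹ • (p t - η • w t))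
    (h2 : σpm = fun t => (Real.sqrt (2 * η))⁻¹ • (p t + η • w t))
    (h3 : σop = fun t => (Real.sqrt (2 * η))⁻¹ • (u t + η • y t))
    (h4 : σom = fun t => (Real.sqrt (2 * η))⁻¹ • (u t - η • y t))
    (σpm' σom' : ℝ → Fin ng → ℝ)
    (hσpm : ∀ t, HasDerivAt σpm (σpm' t) t)
    (hσom : ∀ t, HasDerivAt σom (σom' t) t)
    (au aω : ℝ → Fin ng → ℝ)
    (hau : au = fun t => σop (t - du)) (haω : aω = fun t => σpp (t - dω))
    (hfil1 : ∀ t, ζu • σpm' t = -σpm t + au t)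
    (hfil2 : ∀ t, ζω • σom' t = -σom t + aω t)
    (Sch : ℝ → ℝ)
    (hSch : Sch = fun t =>
      (1/2) * (∫ s in (t - du)..t, σop s ⬝ᵥ σop s) +
      (1/2) * (∫ s in (t - dω)..t, σpp s ⬝ᵥ σpp s) +
      (ζu / 2) * (σpm t ⬝ᵥ σpm t) + (ζω / 2) * (σom t ⬝ᵥ σom t)) :
    ∀ t, HasDerivAt Sch
      (-(w t ⬝ᵥ p t) + u t ⬝ᵥ y t
        - (1/2) * ((au t - σpm t) ⬝ᵥ (au t - σpm t))
        - (1/2) * ((aω t - σom t) ⬝ᵥ (aω t - σom t))) t := by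
  intro t
  have hσop : Continuous σop := h3 ▸ by fun_prop
  have hσpp : Continuous σpp := h1 ▸ by fun_prop
  have H := ((((hasDerivAt_integral_window (hσop.dotProduct hσop) du t).const_mul (1 / 2)).add
    ((hasDerivAt_integral_window (hσpp.dotProduct hσpp) dω t).const_mul (1 / 2))).add
    (((hσpm t).dotProduct (hσpm t)).const_mul (ζu / 2))).add
    (((hσom t).dotProduct (hσom t)).const_mul (ζω / 2))
  subst hSch
  refine H.congr_deriv ?_
  have hport_p : σpm t ⬝ᵥ σpm t - σpp t ⬝ᵥ σpp t = 2 * (w t ⬝ᵥ p t) := by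
    rw [h1, h2, scattering_dotProduct_sub hη, dotProduct_comm]
  have hport_o : σop t ⬝ᵥ σop t - σom t ⬝ᵥ σom t = 2 * (u t ⬝ᵥ y t) := by
    rw [h3, h4, scattering_dotProduct_sub hη]
  have hfilter_u : ζu * (σpm' t ⬝ᵥ σpm t) = (au t - σpm t) ⬝ᵥ σpm t := by
    rw [← smul_eq_mul, ← smul_dotProduct, hfil1, neg_add_eq_sub]
  have hfilter_o : ζω * (σom' t ⬝ᵥ σom t) = (aω t - σom t) ⬝ᵥ σom t := by
    rw [← smul_eq_mul, ← smul_dotProduct, hfil2, neg_add_eq_sub]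
  have hau_t : σop (t - du) = au t := by rw [hau]
  have haω_t : σpp (t - dω) = aω t := by rw [haω]
  rw [hau_t, haω_t, dotProduct_comm (σpm t), dotProduct_comm (σom t)]
  linear_combination (-1 / 2) * hport_p + (1 / 2) * hport_o + hfilter_u + hfilter_o +
    dotProduct_sub_sub_self (au t) (σpm t) + dotProduct_sub_sub_self (aω t) (σom t)

theorem stmt15 {ng : ℕ} (η ζu ζω du dω : ℝ)
    (hη : 0 < η) (hζu : 0 < ζu) (hζω : 0 < ζω) (hdu : 0 < du) (hdω : 0 < dω)
    (u y p w : ℝ → Fin ng → ℝ)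
    (hu : Continuous u) (hy : Continuous y) (hp : Continuous p) (hw : Continuous w)
    (σpp σpm σop σom : ℝ → Fin ng → ℝ)
    (h1 : σpp = fun t => (Real.sqrt (2 * η))⁻¹ • (p t - η • w t))
    (h2 : σpm = fun t => (Real.sqrt (2 * η))⁻¹ • (p t + η • w t))
    (h3 : σop = fun t => (Real.sqrt (2 * η))⁻¹ • (u t + η • y t))
    (h4 : σom = fun t => (Real.sqrt (2 * η))⁻¹ • (u t - η • y t))
    (σpm' σom' : ℝ → Fin ng → ℝ)
    (hσpm : ∀ t, HasDerivAt σpm (σpm' t) t)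
    (hσom : ∀ t, HasDerivAt σom (σom' t) t)
    (au aω : ℝ → Fin ng → ℝ)
    (hau : au = fun t => σop (t - du)) (haω : aω = fun t => σpp (t - dω))
    (hfil1 : ∀ t, ζu • σpm' t = -σpm t + au t)
    (hfil2 : ∀ t, ζω • σom' t = -σom t + aω t)
    (Sch : ℝ → ℝ)
    (hSch : Sch = fun t =>
      (1/2) * (∫ s in (t - du)..t, σop s ⬝ᵥ σop s) +
      (1/2) * (∫ s in (t - dω)..t, σpp s ⬝ᵥ σpp s) +
      (ζu / 2) * (σpm t ⬝ᵥ σpm t) + (ζω / 2) * (σom t ⬝ᵥ σom t)) :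
    ∀ t, HasDerivAt Sch
      (-(w t ⬝ᵥ p t) + u t ⬝ᵥ y t
        - (1/2) * ((au t - σpm t) ⬝ᵥ (au t - σpm t))
        - (1/2) * ((aω t - σom t) ⬝ᵥ (aω t - σom t))) t :=
  stmt15_general η ζu ζω du dω hη u y p w hu hy hp hw σpp σpm σop σom h1 h2 h3 h4 σpm' σom' hσpm
    hσom au aω hau haω hfil1 hfil2 Sch hSch
end
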